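/- arXiv:2603.10729 — 4 statements merged into one kernel-verified Lean document; each statement's English description precedes it below -/
import Mathlib

section
/- Let X = {1/n : n ∈ ℕ, n ≥ 1} ⊆ ℝ. Then the Assouad dimension of X equals 1. -/
open Set Metric

noncomputable section

/-- `coversWith X r n` : `X` can be covered by `n` sets each of diameter at most `r`. -/
def coversWith {α : Type*} [PseudoMetricSpace α] (X : Set α) (r : ℝ) (n : ℕ) : Prop :=
  ∃ B : Fin n → Set α, (∀ i, EMetric.diam (B i) ≤ ENNReal.ofReal r) ∧ X ⊆ ⋃ i, B i

/-- The covering number `N_r(X)`: the minimal number of sets of diameter at most `r`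
needed to cover `X`. -/
noncomputable def coverNum {α : Type*} [PseudoMetricSpace α] (X : Set α) (r : ℝ) : ℕ :=
  sInf {n : ℕ | coversWith X r n}

/-- Upper box dimension: infimum of `s ≥ 0` such that `N_r(X) ≤ C r^{-s}` for all `r ∈ (0,1)`. -/
noncomputable def upperBoxDim {α : Type*} [PseudoMetricSpace α] (X : Set α) : ℝ :=
  sInf {s : ℝ | 0 ≤ s ∧ ∃ C > (0:ℝ), ∀ r ∈ Ioo (0:ℝ) 1,
    (coverNum X r : ℝ) ≤ C * r ^ (-s)}

/-- Assouad dimension (localisation at arbitrary centres `x`). -/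
noncomputable def assouadDim {α : Type*} [PseudoMetricSpace α] (X : Set α) : ℝ :=
  sInf {s : ℝ | 0 ≤ s ∧ ∃ C > (0:ℝ), ∀ R > (0:ℝ), ∀ r ∈ Ioo (0:ℝ) R, ∀ x : α,
    (coverNum (X ∩ closedBall x R) r : ℝ) ≤ C * (R / r) ^ s}

/-- Assouad dimension (localisation at centres `x ∈ X`). -/
noncomputable def assouadDimOn {α : Type*} [PseudoMetricSpace α] (X : Set α) : ℝ :=
  sInf {s : ℝ | 0 ≤ s ∧ ∃ C > (0:ℝ), ∀ R > (0:ℝ), ∀ r ∈ Ioo (0:ℝ) R, ∀ x ∈ X,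
    (coverNum (X ∩ closedBall x R) r : ℝ) ≤ C * (R / r) ^ s}

/-- Upper θ-intermediate dimension, for `θ ∈ (0,1]`: infimum of `s ≥ 0` such that for all
`ε > 0` and all sufficiently small `δ ∈ (0,1)` there is a cover of `X` with all diameters in
`[δ^(1/θ), δ]` and `s`-cost less than `ε`. -/
noncomputable def interDim {α : Type*} [PseudoMetricSpace α] (θ : ℝ) (X : Set α) : ℝ :=
  sInf {s : ℝ | 0 ≤ s ∧ ∀ ε > (0:ℝ), ∃ δ₀ ∈ Ioo (0:ℝ) 1, ∀ δ ∈ Ioo (0:ℝ) δ₀,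
    ∃ n, ∃ B : Fin n → Set α, X ⊆ (⋃ i, B i) ∧
      (∀ i, Metric.diam (B i) ∈ Icc (δ ^ (1/θ)) δ) ∧
      ∑ i, Metric.diam (B i) ^ s < ε}

/-- Assouad spectrum at `θ` (localisation at arbitrary centres `x`). -/
noncomputable def assouadSpec {α : Type*} [PseudoMetricSpace α] (θ : ℝ) (X : Set α) : ℝ :=
  sInf {s : ℝ | 0 ≤ s ∧ ∃ C > (0:ℝ), ∀ r ∈ Ioo (0:ℝ) 1, ∀ x : α,
    (coverNum (X ∩ closedBall x (r ^ θ)) r : ℝ) ≤ C * (r ^ θ / r) ^ s}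

/-- Assouad spectrum at `θ` (localisation at centres `x ∈ X`). -/
noncomputable def assouadSpecOn {α : Type*} [PseudoMetricSpace α] (θ : ℝ) (X : Set α) : ℝ :=
  sInf {s : ℝ | 0 ≤ s ∧ ∃ C > (0:ℝ), ∀ r ∈ Ioo (0:ℝ) 1, ∀ x ∈ X,
    (coverNum (X ∩ closedBall x (r ^ θ)) r : ℝ) ≤ C * (r ^ θ / r) ^ s}

/-- The set `X = {1/n : n ∈ ℕ, n ≥ 1} ⊆ ℝ`. -/
def recipSet : Set ℝ := {x : ℝ | ∃ n : ℕ, 1 ≤ n ∧ x = 1 / (n : ℝ)}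

end

open Filter Topology

/-! The upper bound holds for every subset of `ℝ`: a ball of radius `R` is cut into about
`2R/r` intervals of length `r`. For the lower bound, the ball of radius `1/m` about `0` contains
the `m + 1` points `1/m, …, 1/(2m)`, which are pairwise more than `1/(8m²)` apart; at scale
ratio `R/r = 8m` this forces `N_r ≳ R/r`, which no bound `C (R/r)^s` with `s < 1` allows. -/

def IsAssouadExponent {α : Type*} [PseudoMetricSpace α] (X : Set α) (s : ℝ) : Prop :=
  0 ≤ s ∧ ∃ C > (0:ℝ), ∀ R > (0:ℝ), ∀ r ∈ Ioo (0:ℝ) R, ∀ x : α,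
    (coverNum (X ∩ closedBall x R) r : ℝ) ≤ C * (R / r) ^ s

lemma assouadDim_eq_sInf {α : Type*} [PseudoMetricSpace α] (X : Set α) :
    assouadDim X = sInf {s | IsAssouadExponent X s} :=
  rfl

section Covering

variable {α : Type*} [PseudoMetricSpace α]

lemma card_le_of_coversWith_of_separated {X : Set α} {r : ℝ} (hr : 0 ≤ r) {k n : ℕ}
    (p : Fin k → α) (hp : ∀ i, p i ∈ X) (hsep : Pairwise fun i j => r < dist (p i) (p j))
    (hcov : coversWith X r n) : k ≤ n := by
  obtain ⟨B, hdiam, hX⟩ := hcov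
  choose f hf using fun i => mem_iUnion.1 (hX (hp i))
  have hinj : Function.Injective f := by
    intro i j hij
    by_contra hne
    have hle : edist (p i) (p j) ≤ ENNReal.ofReal r :=
      (Metric.edist_le_ediam_of_mem (hf i) (hij ▸ hf j)).trans (hdiam _)
    exact (hsep hne).not_ge ((edist_le_ofReal hr).1 hle)
  simpa using Fintype.card_le_of_injective f hinj

lemma le_coverNum_of_separated {X : Set α} {r : ℝ} (hr : 0 ≤ r) {k : ℕ}
    (p : Fin k → α) (hp : ∀ i, p i ∈ X) (hsep : Pairwise fun i j => r < dist (p i) (p j))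
    (hfin : ∃ n, coversWith X r n) : k ≤ coverNum X r :=
  card_le_of_coversWith_of_separated hr p hp hsep (Nat.sInf_mem hfin)

end Covering

lemma coversWith_of_subset_Icc {X : Set ℝ} {a L r : ℝ} (hr : 0 < r)
    (hX : X ⊆ Icc a (a + L)) : coversWith X r (⌈L / r⌉₊ + 1) := by
  refine ⟨fun i => Icc (a + (i : ℕ) * r) (a + (i : ℕ) * r + r), fun i => ?_, fun y hy => ?_⟩
  · show Metric.ediam (Icc _ _) ≤ _
    simp [Real.ediam_Icc]
  obtain ⟨hay, hyL⟩ := hX hy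
  have hq : 0 ≤ (y - a) / r := div_nonneg (by linarith) hr.le
  set i := ⌊(y - a) / r⌋₊
  have hi : i ≤ ⌈L / r⌉₊ :=
    (Nat.floor_le_floor (by gcongr; linarith)).trans (Nat.floor_le_ceil _)
  have hlo : (i : ℝ) * r ≤ y - a := (le_div_iff₀ hr).1 (Nat.floor_le hq)
  have hhi : y - a < (i + 1) * r := (div_lt_iff₀ hr).1 (Nat.lt_floor_add_one _)
  exact mem_iUnion.2 ⟨⟨i, by omega⟩, by simp only; constructor <;> linarith⟩

lemma coversWith_inter_closedBall (X : Set ℝ) (x : ℝ) {R r : ℝ} (hr : 0 < r) :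
    coversWith (X ∩ closedBall x R) r (⌈2 * R / r⌉₊ + 1) := by
  refine coversWith_of_subset_Icc (a := x - R) hr fun y hy => ?_
  obtain ⟨h₁, h₂⟩ := Real.closedBall_eq_Icc ▸ hy.2
  exact ⟨h₁, by linarith⟩

lemma coverNum_inter_closedBall_le (X : Set ℝ) (x : ℝ) {R r : ℝ} (hR : 0 ≤ R) (hr : 0 < r) :
    (coverNum (X ∩ closedBall x R) r : ℝ) ≤ 2 * R / r + 2 := by
  have hle : (coverNum (X ∩ closedBall x R) r : ℝ) ≤ ⌈2 * R / r⌉₊ + 1 := by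
    exact_mod_cast Nat.sInf_le (coversWith_inter_closedBall X x hr)
  linarith [Nat.ceil_lt_add_one (by positivity : 0 ≤ 2 * R / r)]

lemma isAssouadExponent_one (X : Set ℝ) : IsAssouadExponent X 1 := by
  refine ⟨zero_le_one, 4, by norm_num, fun R hR r hr x => ?_⟩
  have hRr : 1 ≤ R / r := (one_le_div hr.1).2 hr.2.le
  have hcount := coverNum_inter_closedBall_le X x hR.le hr.1
  rw [mul_div_assoc] at hcount
  rw [Real.rpow_one]
  linarith

lemma one_div_lt_one_div_sub_one_div {m a b : ℕ} (hm : 1 ≤ m) (ha : m ≤ a) (hab : a < b)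
    (hb : b ≤ 2 * m) : 1 / (8 * (m : ℝ) ^ 2) < 1 / (a : ℝ) - 1 / (b : ℝ) := by
  have hm' : (1 : ℝ) ≤ m := by exact_mod_cast hm
  have ha' : (m : ℝ) ≤ a := by exact_mod_cast ha
  have hab' : (a : ℝ) + 1 ≤ b := by exact_mod_cast hab
  have hb' : (b : ℝ) ≤ 2 * m := by exact_mod_cast hb
  have hapos : (0 : ℝ) < a := by linarith
  have hbpos : (0 : ℝ) < b := by linarith
  rw [div_sub_div _ _ hapos.ne' hbpos.ne', div_lt_div_iff₀ (by positivity) (by positivity)]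
  nlinarith [mul_le_mul (by linarith : (a : ℝ) ≤ 2 * m) hb' hbpos.le (by linarith)]

lemma le_coverNum_recipSet {m : ℕ} (hm : 1 ≤ m) :
    m + 1 ≤ coverNum (recipSet ∩ closedBall 0 (1 / m)) (1 / (8 * (m : ℝ) ^ 2)) := by
  have hmpos : (0 : ℝ) < m := by exact_mod_cast hm
  refine le_coverNum_of_separated (by positivity) (fun j => 1 / ((m + j : ℕ) : ℝ))
    (fun j => ⟨⟨m + j, by omega, rfl⟩, ?_⟩) ?_ ⟨_, coversWith_inter_closedBall _ _ (by positivity)⟩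
  · rw [mem_closedBall, dist_zero_right, Real.norm_eq_abs, abs_of_nonneg (by positivity)]
    exact one_div_le_one_div_of_le hmpos (by exact_mod_cast Nat.le_add_right m j)
  · intro i j hij
    wlog hlt : i < j generalizing i j
    · rw [dist_comm]
      exact this hij.symm (lt_of_le_of_ne (not_lt.1 hlt) hij.symm)
    have hlt' : (i : ℕ) < j := hlt
    rw [Real.dist_eq]
    refine lt_of_lt_of_le ?_ (le_abs_self _)
    exact one_div_lt_one_div_sub_one_div hm (by omega) (by omega) (by omega)

lemma exists_nat_mul_rpow_lt {s : ℝ} (hs : s < 1) (C : ℝ) :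
    ∃ m : ℕ, 1 ≤ m ∧ C * (m : ℝ) ^ s < m := by
  have hlim : Tendsto (fun m : ℕ => C * (m : ℝ) ^ (s - 1)) atTop (𝓝 0) := by
    simpa [neg_sub] using
      ((tendsto_rpow_neg_atTop (by linarith : 0 < 1 - s)).comp
        tendsto_natCast_atTop_atTop).const_mul C
  obtain ⟨m, hlt, hm⟩ :=
    ((hlim.eventually (gt_mem_nhds one_pos)).and (eventually_ge_atTop 1)).exists
  have hmpos : (0 : ℝ) < m := by exact_mod_cast hm
  refine ⟨m, hm, ?_⟩
  calc C * (m : ℝ) ^ s = C * (m : ℝ) ^ (s - 1) * m := by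
        rw [Real.rpow_sub_one hmpos.ne']; field_simp
    _ < 1 * m := by gcongr
    _ = m := one_mul _

lemma one_le_of_isAssouadExponent_recipSet {s : ℝ} (hs : IsAssouadExponent recipSet s) :
    1 ≤ s := by
  obtain ⟨-, C, -, hbound⟩ := hs
  by_contra! hs1
  obtain ⟨m, hm, hm_lt⟩ := exists_nat_mul_rpow_lt hs1 (C * 8 ^ s)
  have hmpos : (0 : ℝ) < m := by exact_mod_cast hm
  have hrR : 1 / (8 * (m : ℝ) ^ 2) < 1 / m := by
    rw [div_lt_div_iff₀ (by positivity) hmpos]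
    nlinarith [(Nat.one_le_cast (α := ℝ)).2 hm]
  have hratio : (1 / m) / (1 / (8 * (m : ℝ) ^ 2)) = 8 * m := by field_simp
  have hupper := hbound (1 / m) (by positivity) _ ⟨by positivity, hrR⟩ 0
  rw [hratio, Real.mul_rpow (by norm_num) hmpos.le, ← mul_assoc] at hupper
  have hlower : (m : ℝ) + 1 ≤ coverNum (recipSet ∩ closedBall 0 (1 / m))
      (1 / (8 * (m : ℝ) ^ 2)) := by exact_mod_cast le_coverNum_recipSet hm
  linarith

theorem stmt4 : assouadDim recipSet = 1 := by
  rw [assouadDim_eq_sInf]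
  exact IsLeast.csInf_eq ⟨isAssouadExponent_one _, fun _ => one_le_of_isAssouadExponent_recipSet⟩
end

section
/- Let X = {1/n : n ∈ ℕ, n ≥ 1} ⊆ ℝ and θ ∈ (0,1). Then the upper θ-intermediate dimension of X equals θ/(1+θ). -/
open Set Metric

/-!
Upper bound: cover the points `1/k` with `k ≤ δ^(-1/(1+θ))` one by one with sets of the smallest
admissible diameter `δ^(1/θ)`, and the interval `[0, δ^(1/(1+θ))]` containing the remaining points
by intervals of length `δ`. For `s > θ/(1+θ)` both parts have `s`-cost tending to `0` with `δ`.

Lower bound: the points `1/k`, `n < k ≤ 2n`, are `1/(4n²)`-separated, so a set of diameter `d`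
contains at most `4n²d + 1` of them. For a cover with diameters in `[δ^(1/θ), δ]` this gives
`n ≤ (4n²δ^(1-s) + δ^(-s/θ)) ∑ |B_i|^s`; taking `n ≈ δ^(-(s/θ + 1 - s)/2)` balances the two terms
and, for `s < θ/(1+θ)`, forces the cost to exceed `1` once `δ` is small.
-/

open Bornology Filter Topology

lemma dist_one_div_natCast {k l : ℕ} (hk : 0 < k) (hkl : k ≤ l) :
    dist (1 / (k : ℝ)) (1 / l) = (l - k) / (k * l) := by
  have hk' : (0 : ℝ) < k := by exact_mod_cast hk
  have hl' : (0 : ℝ) < l := by exact_mod_cast hk.trans_le hkl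
  have hkl' : 1 / (l : ℝ) ≤ 1 / k := one_div_le_one_div_of_le hk' (by exact_mod_cast hkl)
  rw [Real.dist_eq, abs_of_nonneg (sub_nonneg.2 hkl')]
  field_simp

lemma card_le_sq_mul_diam_add_one {B : Set ℝ} (hB : IsBounded B) {M : ℕ} {G : Finset ℕ}
    (hG : ∀ k ∈ G, 0 < k ∧ k ≤ M ∧ 1 / (k : ℝ) ∈ B) :
    (G.card : ℝ) ≤ M ^ 2 * diam B + 1 := by
  rcases G.eq_empty_or_nonempty with rfl | hne
  · simp only [Finset.card_empty, Nat.cast_zero]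
    positivity
  obtain ⟨hk₀, hk₀M, hk₀B⟩ := hG _ (G.min'_mem hne)
  obtain ⟨-, hk₁M, hk₁B⟩ := hG _ (G.max'_mem hne)
  set k₀ := G.min' hne
  set k₁ := G.max' hne
  have hk₀₁ : k₀ ≤ k₁ := G.min'_le _ (G.max'_mem hne)
  have hcard : G.card ≤ k₁ + 1 - k₀ := by
    rw [← Nat.card_Icc]
    exact Finset.card_le_card fun k hk ↦ Finset.mem_Icc.2 ⟨G.min'_le k hk, G.le_max' k hk⟩
  have hgap : (k₁ - k₀ : ℝ) ≤ M ^ 2 * diam B := by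
    have hdist := dist_le_diam_of_mem hB hk₀B hk₁B
    have hk₀' : (0 : ℝ) < k₀ := by exact_mod_cast hk₀
    have hk₁' : (0 : ℝ) < k₁ := by exact_mod_cast hk₀.trans_le hk₀₁
    rw [dist_one_div_natCast hk₀ hk₀₁, div_le_iff₀ (by positivity)] at hdist
    have hprod : (k₀ * k₁ : ℝ) ≤ M ^ 2 := by
      have h₀ : (k₀ : ℝ) ≤ M := by exact_mod_cast hk₀M
      have h₁ : (k₁ : ℝ) ≤ M := by exact_mod_cast hk₁M
      rw [sq]; exact mul_le_mul h₀ h₁ hk₁'.le (Nat.cast_nonneg M)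
    nlinarith [diam_nonneg (s := B)]
  calc (G.card : ℝ) ≤ ((k₁ + 1 - k₀ : ℕ) : ℝ) := by exact_mod_cast hcard
    _ = k₁ - k₀ + 1 := by push_cast [Nat.sub_add_comm hk₀₁, Nat.cast_sub hk₀₁]; ring
    _ ≤ M ^ 2 * diam B + 1 := by linarith

lemma natCast_le_sum_sq_mul_diam_add_one (n : ℕ) {m : ℕ} {B : Fin m → Set ℝ}
    (hcov : recipSet ⊆ ⋃ i, B i) (hB : ∀ i, IsBounded (B i)) :
    (n : ℝ) ≤ ∑ i, (4 * n ^ 2 * diam (B i) + 1) := by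
  classical
  let F := Finset.Icc (n + 1) (2 * n)
  have hF : F ⊆ Finset.univ.biUnion fun i ↦ F.filter fun k : ℕ ↦ 1 / (k : ℝ) ∈ B i := by
    intro k hk
    obtain ⟨i, hi⟩ := mem_iUnion.1 (hcov ⟨k, by grind, rfl⟩)
    exact Finset.mem_biUnion.2 ⟨i, Finset.mem_univ _, Finset.mem_filter.2 ⟨hk, hi⟩⟩
  have hcount : ∀ i, (((F.filter fun k : ℕ ↦ 1 / (k : ℝ) ∈ B i).card : ℕ) : ℝ) ≤
      4 * n ^ 2 * diam (B i) + 1 := by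
    intro i
    have h := card_le_sq_mul_diam_add_one (hB i) (M := 2 * n)
      (G := F.filter fun k : ℕ ↦ 1 / (k : ℝ) ∈ B i) fun k hk ↦ by
        simp only [Finset.mem_filter, Finset.mem_Icc, F] at hk
        exact ⟨by omega, hk.1.2, hk.2⟩
    convert h using 2
    push_cast; ring
  calc (n : ℝ) = (F.card : ℕ) := by simp [F]; omega
    _ ≤ ((∑ i, (F.filter fun k : ℕ ↦ 1 / (k : ℝ) ∈ B i).card : ℕ) : ℝ) := by
      exact_mod_cast (Finset.card_le_card hF).trans Finset.card_biUnion_le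
    _ ≤ ∑ i, (4 * n ^ 2 * diam (B i) + 1) := by
      push_cast
      exact Finset.sum_le_sum fun i _ ↦ hcount i

lemma mul_add_one_le_mul_rpow {θ s δ d c : ℝ} (hc : 0 ≤ c) (hs₀ : 0 ≤ s) (hs₁ : s ≤ 1)
    (hδ : 0 < δ) (hδd : δ ^ (1 / θ) ≤ d) (hdδ : d ≤ δ) :
    c * d + 1 ≤ (c * δ ^ (1 - s) + δ ^ (-(s / θ))) * d ^ s := by
  have hd₀ : 0 < d := (Real.rpow_pos_of_pos hδ _).trans_le hδd
  have hd : d ≤ δ ^ (1 - s) * d ^ s := calc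
    d = d ^ (1 - s) * d ^ s := by rw [← Real.rpow_add hd₀]; norm_num
    _ ≤ δ ^ (1 - s) * d ^ s := by gcongr
  have h1 : 1 ≤ δ ^ (-(s / θ)) * d ^ s := calc
    (1 : ℝ) = δ ^ (-(s / θ)) * (δ ^ (1 / θ)) ^ s := by
      rw [← Real.rpow_mul hδ.le, ← Real.rpow_add hδ]; ring_nf; simp
    _ ≤ δ ^ (-(s / θ)) * d ^ s := by gcongr
  nlinarith

lemma natCast_le_mul_sum_diam_rpow {θ s δ : ℝ} (hs₀ : 0 ≤ s) (hs₁ : s ≤ 1)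
    (hδ : 0 < δ) (n : ℕ) {m : ℕ} {B : Fin m → Set ℝ} (hcov : recipSet ⊆ ⋃ i, B i)
    (hdiam : ∀ i, diam (B i) ∈ Icc (δ ^ (1 / θ)) δ) :
    (n : ℝ) ≤ (4 * n ^ 2 * δ ^ (1 - s) + δ ^ (-(s / θ))) * ∑ i, diam (B i) ^ s := by
  have hpos : ∀ i, 0 < diam (B i) := fun i ↦ (Real.rpow_pos_of_pos hδ _).trans_le (hdiam i).1
  have hB : ∀ i, IsBounded (B i) := fun i ↦ by
    by_contra h
    exact (hpos i).ne' (diam_eq_zero_of_unbounded h)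
  have hterm : ∀ i, 4 * n ^ 2 * diam (B i) + 1 ≤
      (4 * n ^ 2 * δ ^ (1 - s) + δ ^ (-(s / θ))) * diam (B i) ^ s := fun i ↦
    mul_add_one_le_mul_rpow (by positivity) hs₀ hs₁ hδ (hdiam i).1 (hdiam i).2
  calc (n : ℝ) ≤ ∑ i, (4 * n ^ 2 * diam (B i) + 1) :=
        natCast_le_sum_sq_mul_diam_add_one n hcov hB
    _ ≤ ∑ i, (4 * n ^ 2 * δ ^ (1 - s) + δ ^ (-(s / θ))) * diam (B i) ^ s :=
        Finset.sum_le_sum fun i _ ↦ hterm i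
    _ = _ := (Finset.mul_sum ..).symm

lemma eventually_one_le_sum_diam_rpow {θ s : ℝ} (hθ : 0 < θ) (hs₀ : 0 ≤ s)
    (hs : s < θ / (1 + θ)) :
    ∀ᶠ δ in 𝓝[>] 0, ∀ m (B : Fin m → Set ℝ), recipSet ⊆ ⋃ i, B i →
      (∀ i, diam (B i) ∈ Icc (δ ^ (1 / θ)) δ) → 1 ≤ ∑ i, diam (B i) ^ s := by
  have hs₁ : s ≤ 1 := hs.le.trans (div_le_one_of_le₀ (by linarith) (by linarith))
  set a := (s / θ + 1 - s) / 2
  have he : s / θ - a < 0 := by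
    simp only [a]
    have : s * (1 + θ) < θ := (lt_div_iff₀ (by linarith)).1 hs
    have : s / θ + s < 1 := by rw [div_add' _ _ _ hθ.ne', div_lt_one hθ]; linarith
    linarith
  filter_upwards [Ioo_mem_nhdsGT zero_lt_one,
    (tendsto_rpow_neg_nhdsGT_zero he).eventually_gt_atTop 17] with δ ⟨hδ₀, hδ₁⟩ hδe m B hcov hdiam
  set n := ⌈δ ^ (-a)⌉₊
  have ha : 1 ≤ δ ^ (-a) := Real.one_le_rpow_of_pos_of_le_one_of_nonpos hδ₀ hδ₁.le (by
    have : 0 ≤ s / θ := by positivity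
    linarith)
  have hn : δ ^ (-a) ≤ n := Nat.le_ceil _
  have hn₂ : (n : ℝ) ≤ 2 * δ ^ (-a) := Nat.ceil_le_two_mul (by linarith)
  have hsplit : δ ^ (-a) * δ ^ (-a) * δ ^ (1 - s) = δ ^ (-(s / θ)) := by
    rw [← Real.rpow_add hδ₀, ← Real.rpow_add hδ₀]; congr 1; ring
  have hbound : 4 * n ^ 2 * δ ^ (1 - s) + δ ^ (-(s / θ)) ≤ 17 * δ ^ (-(s / θ)) := by
    have : 4 * (n : ℝ) ^ 2 ≤ 16 * (δ ^ (-a) * δ ^ (-a)) := by nlinarith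
    have := mul_le_mul_of_nonneg_right this (Real.rpow_pos_of_pos hδ₀ (1 - s)).le
    rw [mul_assoc 16, hsplit] at this
    linarith
  have hlt : 17 * δ ^ (-(s / θ)) < δ ^ (-a) := by
    have := mul_lt_mul_of_pos_right hδe (Real.rpow_pos_of_pos hδ₀ (-(s / θ)))
    rwa [← Real.rpow_add hδ₀, show s / θ - a + -(s / θ) = -a by ring] at this
  by_contra! hsum
  have hcost := natCast_le_mul_sum_diam_rpow hs₀ hs₁ hδ₀ n hcov hdiam
  have : (n : ℝ) < 17 * δ ^ (-(s / θ)) := calc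
    (n : ℝ) ≤ (4 * n ^ 2 * δ ^ (1 - s) + δ ^ (-(s / θ))) * ∑ i, diam (B i) ^ s := hcost
    _ ≤ 17 * δ ^ (-(s / θ)) * ∑ i, diam (B i) ^ s := by gcongr
    _ < 17 * δ ^ (-(s / θ)) := mul_lt_of_lt_one_right (by positivity) hsum
  linarith

lemma iUnion_fin_append {α : Type*} {m n : ℕ} (f : Fin m → Set α) (g : Fin n → Set α) :
    ⋃ i, Fin.append f g i = (⋃ i, f i) ∪ ⋃ j, g j := by
  ext x
  simp only [mem_iUnion, mem_union]
  constructor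
  · rintro ⟨i, hi⟩
    refine Fin.addCases (fun i hi ↦ ?_) (fun j hj ↦ ?_) i hi
    · exact Or.inl ⟨i, by simpa using hi⟩
    · exact Or.inr ⟨j, by simpa using hj⟩
  · rintro (⟨i, hi⟩ | ⟨j, hj⟩)
    · exact ⟨Fin.castAdd n i, by simpa using hi⟩
    · exact ⟨Fin.natAdd m j, by simpa using hj⟩

lemma recipSet_subset_union_Icc {N K : ℕ} {r δ : ℝ} (hr : 0 ≤ r) (hδ : 0 < δ)
    (hNK : 1 ≤ N * (K * δ)) :
    recipSet ⊆ (⋃ i : Fin N, Icc (1 / ((i : ℕ) + 1 : ℝ)) (1 / ((i : ℕ) + 1 : ℝ) + r)) ∪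
      ⋃ j : Fin K, Icc ((j : ℕ) * δ) ((j : ℕ) * δ + δ) := by
  rintro _ ⟨m, hm, rfl⟩
  by_cases hmN : m ≤ N
  · refine Or.inl (mem_iUnion.2 ⟨⟨m - 1, by omega⟩, ?_⟩)
    have : ((m - 1 : ℕ) : ℝ) + 1 = m := by norm_cast; omega
    simp only [this]
    exact ⟨le_rfl, by linarith⟩
  · have hm₀ : (0 : ℝ) < m := by exact_mod_cast hm
    have hx : 0 ≤ 1 / (m : ℝ) / δ := by positivity
    have hjK : ⌊1 / (m : ℝ) / δ⌋₊ < K := by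
      have hNm : (N : ℝ) + 1 ≤ m := by exact_mod_cast not_le.1 hmN
      have hKδ : 0 ≤ K * δ := by positivity
      have : 1 < m * (K * δ) := by nlinarith
      rw [Nat.floor_lt hx, div_lt_iff₀ hδ, div_lt_iff₀ hm₀]
      linarith
    refine Or.inr (mem_iUnion.2 ⟨⟨_, hjK⟩, ?_, ?_⟩)
    · exact (le_div_iff₀ hδ).1 (Nat.floor_le hx)
    · have := (div_lt_iff₀ hδ).1 (Nat.lt_floor_add_one (1 / (m : ℝ) / δ))
      simp only at this ⊢
      linarith

lemma exists_cover_recipSet {N K : ℕ} {r δ : ℝ} (hr : 0 < r) (hrδ : r ≤ δ)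
    (hNK : 1 ≤ N * (K * δ)) (s : ℝ) :
    ∃ n, ∃ B : Fin n → Set ℝ, recipSet ⊆ ⋃ i, B i ∧ (∀ i, diam (B i) ∈ Icc r δ) ∧
      ∑ i, diam (B i) ^ s = N * r ^ s + K * δ ^ s := by
  have hδ : 0 < δ := hr.trans_le hrδ
  refine ⟨N + K, Fin.append
    (fun i : Fin N ↦ Icc (1 / ((i : ℕ) + 1 : ℝ)) (1 / ((i : ℕ) + 1 : ℝ) + r))
    (fun j : Fin K ↦ Icc ((j : ℕ) * δ) ((j : ℕ) * δ + δ)), ?_, ?_, ?_⟩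
  · rw [iUnion_fin_append]
    exact recipSet_subset_union_Icc hr.le hδ hNK
  · refine Fin.addCases (fun i ↦ ?_) (fun j ↦ ?_)
    · simp [Real.diam_Icc, hr.le, hrδ]
    · simp [Real.diam_Icc, hδ.le, hrδ]
  · simp [Fin.sum_univ_add, Real.diam_Icc, hr.le, hδ.le]

lemma tendsto_rpow_nhdsGT_zero {p : ℝ} (hp : 0 < p) :
    Tendsto (fun δ : ℝ ↦ δ ^ p) (𝓝[>] 0) (𝓝 0) := by
  simpa [Real.zero_rpow hp.ne'] using
    (Real.continuousAt_rpow_const 0 p (Or.inr hp.le)).tendsto.mono_left nhdsWithin_le_nhds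

lemma eventually_exists_cover_sum_diam_rpow_lt {θ s ε : ℝ} (hθ₀ : 0 < θ) (hθ₁ : θ ≤ 1)
    (hs : θ / (1 + θ) < s) (hε : 0 < ε) :
    ∀ᶠ δ in 𝓝[>] 0, ∃ n, ∃ B : Fin n → Set ℝ, recipSet ⊆ ⋃ i, B i ∧
      (∀ i, diam (B i) ∈ Icc (δ ^ (1 / θ)) δ) ∧ ∑ i, diam (B i) ^ s < ε := by
  have hp : 0 < s / θ - 1 / (1 + θ) := by
    rw [sub_pos, div_lt_div_iff₀ (by linarith) hθ₀]
    linarith [(div_lt_iff₀ (by linarith : 0 < 1 + θ)).1 hs]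
  have hq : 0 < s - θ / (1 + θ) := sub_pos.2 hs
  have hlim : Tendsto (fun δ : ℝ ↦ 2 * δ ^ (s / θ - 1 / (1 + θ)) + 2 * δ ^ (s - θ / (1 + θ)))
      (𝓝[>] 0) (𝓝 0) := by
    simpa using ((tendsto_rpow_nhdsGT_zero hp).const_mul 2).add
      ((tendsto_rpow_nhdsGT_zero hq).const_mul 2)
  filter_upwards [Ioo_mem_nhdsGT one_pos, hlim.eventually (gt_mem_nhds hε)]
    with δ ⟨hδ₀, hδ₁⟩ hsmall
  set N := ⌈δ ^ (-(1 / (1 + θ)))⌉₊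
  set K := ⌈δ ^ (-(θ / (1 + θ)))⌉₊
  have hpow : ∀ t : ℝ, 0 ≤ t → 2⁻¹ ≤ δ ^ (-t) := fun t ht ↦ by
    linarith [Real.one_le_rpow_of_pos_of_le_one_of_nonpos hδ₀ hδ₁.le (neg_nonpos.2 ht)]
  have hN : (N : ℝ) ≤ 2 * δ ^ (-(1 / (1 + θ))) := Nat.ceil_le_two_mul (hpow _ (by positivity))
  have hK : (K : ℝ) ≤ 2 * δ ^ (-(θ / (1 + θ))) := Nat.ceil_le_two_mul (hpow _ (by positivity))
  have hNK : 1 ≤ N * (K * δ) := calc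
    (1 : ℝ) = δ ^ (-(1 / (1 + θ))) * (δ ^ (-(θ / (1 + θ))) * δ) := by
      rw [← Real.rpow_add_one hδ₀.ne', ← Real.rpow_add hδ₀]
      field_simp
      simp
    _ ≤ N * (K * δ) := by gcongr <;> exact Nat.le_ceil _
  have hr : δ ^ (1 / θ) ≤ δ := by
    simpa using Real.rpow_le_rpow_of_exponent_ge hδ₀ hδ₁.le (one_le_one_div hθ₀ hθ₁)
  obtain ⟨n, B, hcov, hdiam, hsum⟩ :=
    exists_cover_recipSet (Real.rpow_pos_of_pos hδ₀ _) hr hNK s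
  refine ⟨n, B, hcov, hdiam, ?_⟩
  calc ∑ i, diam (B i) ^ s = N * δ ^ (s / θ) + K * δ ^ s := by
        rw [hsum, ← Real.rpow_mul hδ₀.le, one_div_mul_eq_div]
    _ ≤ 2 * δ ^ (-(1 / (1 + θ))) * δ ^ (s / θ) + 2 * δ ^ (-(θ / (1 + θ))) * δ ^ s := by
        gcongr
    _ = 2 * δ ^ (s / θ - 1 / (1 + θ)) + 2 * δ ^ (s - θ / (1 + θ)) := by
        rw [mul_assoc, mul_assoc, ← Real.rpow_add hδ₀, ← Real.rpow_add hδ₀]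
        ring_nf
    _ < ε := hsmall

lemma exists_Ioo_of_eventually_nhdsGT {P : ℝ → Prop} (h : ∀ᶠ δ in 𝓝[>] 0, P δ) :
    ∃ δ₀ ∈ Ioo (0 : ℝ) 1, ∀ δ ∈ Ioo 0 δ₀, P δ := by
  obtain ⟨δ₀, hδ₀, hP⟩ := (nhdsGT_basis (0 : ℝ)).eventually_iff.1 h
  exact ⟨min δ₀ (1 / 2), ⟨by positivity, by norm_num⟩,
    fun δ hδ ↦ hP ⟨hδ.1, hδ.2.trans_le (min_le_left _ _)⟩⟩

lemma csInf_eq_of_Ioi_subset_of_subset_Ici {S : Set ℝ} {a : ℝ} (hIoi : Ioi a ⊆ S)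
    (hIci : S ⊆ Ici a) : sInf S = a :=
  le_antisymm (csInf_Ioi (a := a) ▸ csInf_le_csInf ⟨a, hIci⟩ nonempty_Ioi hIoi)
    (le_csInf (nonempty_Ioi.mono hIoi) hIci)

theorem stmt9 (θ : ℝ) (hθ : θ ∈ Ioo (0:ℝ) 1) :
    interDim θ recipSet = θ / (1 + θ) := by
  obtain ⟨hθ₀, hθ₁⟩ := hθ
  apply csInf_eq_of_Ioi_subset_of_subset_Ici
  · intro s hs
    exact ⟨((div_pos hθ₀ (by linarith)).trans hs).le, fun ε hε ↦
      exists_Ioo_of_eventually_nhdsGT (eventually_exists_cover_sum_diam_rpow_lt hθ₀ hθ₁.le hs hε)⟩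
  · rintro s ⟨hs₀, hs⟩
    refine mem_Ici.2 (le_of_not_gt fun hlt ↦ ?_)
    obtain ⟨δ₀, ⟨hδ₀, -⟩, hcover⟩ := hs 1 one_pos
    obtain ⟨δ, hlow, hδ⟩ :=
      ((eventually_one_le_sum_diam_rpow hθ₀ hs₀ hlt).and (Ioo_mem_nhdsGT hδ₀)).exists
    obtain ⟨n, B, hcov, hdiam, hsum⟩ := hcover δ hδ
    exact (hlow n B hcov hdiam).not_gt hsum
end

section
/- Mass distribution lower bound for intermediate dimensions of X = {1/n : n ≥ 1}: fix θ ∈ (0,1), set s = θ/(1+θ). There is a constant c > 0 such that for every r ∈ (0,1/2) and every cover {B_k} of X with all diameters |B_k| ∈ [r, r^θ], we have Σ_k |B_k|^s ≥ c. -/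
open Set Metric

private lemma count_in_ball (B : Set ℝ) (M : ℕ) (d : ℝ) (hd : 0 ≤ d)
    (hdist : ∀ x ∈ B, ∀ y ∈ B, dist x y ≤ d) (S : Finset ℕ)
    (hSsub : ∀ k ∈ S, 1 ≤ k ∧ k ≤ M) (hSB : ∀ k ∈ S, (1/(k:ℝ)) ∈ B) :
    (S.card : ℝ) ≤ d * (M:ℝ)^2 + 1 := by
  classical
  rcases S.eq_empty_or_nonempty with h | h
  · rw [h]; simp; positivity
  · set k₀ := S.min' h with hk0
    have hk₀S : k₀ ∈ S := S.min'_mem h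
    have hk₀1 : 1 ≤ k₀ := (hSsub k₀ hk₀S).1
    have hk₀M : k₀ ≤ M := (hSsub k₀ hk₀S).2
    have hsub : S ⊆ Finset.Icc k₀ (k₀ + ⌊d * (M:ℝ)^2⌋₊) := by
      intro k hk
      have hk1 : 1 ≤ k := (hSsub k hk).1
      have hkM : k ≤ M := (hSsub k hk).2
      have hmin : k₀ ≤ k := S.min'_le k hk
      refine Finset.mem_Icc.mpr ⟨hmin, ?_⟩
      have hdk : dist (1/(k₀:ℝ)) (1/(k:ℝ)) ≤ d :=
        hdist _ (hSB k₀ hk₀S) _ (hSB k hk)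
      have hk0pos : (0:ℝ) < k₀ := by exact_mod_cast hk₀1
      have hkpos : (0:ℝ) < k := by exact_mod_cast hk1
      have hmin' : (k₀:ℝ) ≤ k := by exact_mod_cast hmin
      have hle : (1:ℝ)/k ≤ 1/k₀ := one_div_le_one_div_of_le hk0pos hmin'
      rw [Real.dist_eq, abs_of_nonneg (by linarith)] at hdk
      have heq : (1:ℝ)/k₀ - 1/k = ((k:ℝ) - k₀)/(k₀ * k) := by
        field_simp
      rw [heq, div_le_iff₀ (by positivity)] at hdk
      have hkM' : (k:ℝ) ≤ M := by exact_mod_cast hkM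
      have hk₀M' : (k₀:ℝ) ≤ M := by exact_mod_cast hk₀M
      have hprod : (k₀:ℝ) * k ≤ (M:ℝ) * M :=
        mul_le_mul hk₀M' hkM' hkpos.le (by positivity)
      have hgap : ((k:ℝ) - k₀) ≤ d * (M:ℝ)^2 := by
        have h2 := mul_le_mul_of_nonneg_left hprod hd
        nlinarith
      have hcast : ((k - k₀ : ℕ) : ℝ) ≤ d * (M:ℝ)^2 := by
        rw [Nat.cast_sub hmin]; exact hgap
      have := Nat.le_floor hcast
      omega
    calc (S.card : ℝ) ≤ ((Finset.Icc k₀ (k₀ + ⌊d * (M:ℝ)^2⌋₊)).card : ℝ) := by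
          exact_mod_cast Finset.card_le_card hsub
      _ = (⌊d * (M:ℝ)^2⌋₊ : ℝ) + 1 := by
          rw [Nat.card_Icc]
          have hh : k₀ + ⌊d * (M:ℝ)^2⌋₊ + 1 - k₀ = ⌊d * (M:ℝ)^2⌋₊ + 1 := by omega
          rw [hh]; push_cast; ring
      _ ≤ d * (M:ℝ)^2 + 1 := by
          have := Nat.floor_le (by positivity : (0:ℝ) ≤ d * (M:ℝ)^2); linarith

theorem stmt11 (θ : ℝ) (hθ : θ ∈ Ioo (0:ℝ) 1) :
    ∃ c > (0:ℝ), ∀ r ∈ Ioo (0:ℝ) (1/2), ∀ (ι : Type) (B : ι → Set ℝ),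
      recipSet ⊆ (⋃ k, B k) →
      (∀ k, Metric.diam (B k) ∈ Icc r (r ^ θ)) →
      ENNReal.ofReal c ≤ ∑' k, ENNReal.ofReal (Metric.diam (B k) ^ (θ / (1 + θ))) := by
  classical
  obtain ⟨hθ0, hθ1⟩ := hθ
  set s := θ / (1 + θ) with hs
  have h1θ : (0:ℝ) < 1 + θ := by linarith
  have hs0 : 0 < s := div_pos hθ0 h1θ
  have hs1 : s < 1 := by rw [hs, div_lt_one h1θ]; linarith
  refine ⟨1/5, by norm_num, ?_⟩
  rintro r ⟨hr0, hr12⟩ ι B hcov hdiam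
  have hr1 : r < 1 := by linarith
  set M := ⌈r ^ (-s)⌉₊ with hMdef
  have hrspos : (0:ℝ) < r ^ (-s) := Real.rpow_pos_of_pos hr0 _
  have hrs1 : 1 ≤ r ^ (-s) :=
    Real.one_le_rpow_of_pos_of_le_one_of_nonpos hr0 hr1.le (by linarith)
  have hM1 : r ^ (-s) ≤ (M:ℝ) := Nat.le_ceil _
  have hMone : (1:ℝ) ≤ (M:ℝ) := le_trans hrs1 hM1
  have hMpos : (0:ℝ) < M := by linarith
  have hM2 : (M:ℝ) ≤ 2 * r ^ (-s) := by
    have := Nat.ceil_lt_add_one hrspos.le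
    linarith
  -- boundedness and distance bound in each B k
  have hBd : ∀ k, ∀ x ∈ B k, ∀ y ∈ B k, dist x y ≤ Metric.diam (B k) := by
    intro k
    have hb : Bornology.IsBounded (B k) := by
      by_contra h
      have h0 := Metric.diam_eq_zero_of_unbounded h
      have hr := (hdiam k).1
      rw [h0] at hr; linarith
    intro x hx y hy
    exact Metric.dist_le_diam_of_mem hb hx hy
  have hix : ∀ k : ℕ, 1 ≤ k → ∃ j, (1/(k:ℝ)) ∈ B j := by
    intro k hk
    have hx : (1/(k:ℝ)) ∈ recipSet := ⟨k, hk, rfl⟩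
    simpa using hcov hx
  obtain ⟨j0, -⟩ := hix 1 le_rfl
  set ix : ℕ → ι := fun k => if h : ∃ j, (1/(k:ℝ)) ∈ B j then h.choose else j0 with hixdef
  set K := (Finset.Icc 1 M).image ix with hK
  set S : ι → Finset ℕ :=
    fun j => (Finset.Icc 1 M).filter (fun k : ℕ => (1/(k:ℝ)) ∈ B j) with hSdef
  have hcard : M ≤ ∑ j ∈ K, (S j).card := by
    have hsub : Finset.Icc 1 M ⊆ K.biUnion S := by
      intro k hk
      have h1 := (Finset.mem_Icc.mp hk).1
      obtain h := hix k h1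
      refine Finset.mem_biUnion.mpr ⟨ix k, Finset.mem_image_of_mem _ hk, ?_⟩
      refine Finset.mem_filter.mpr ⟨hk, ?_⟩
      show (1/(k:ℝ)) ∈ B (ix k)
      simp only [hixdef]
      rw [dif_pos h]
      exact h.choose_spec
    calc M = (Finset.Icc 1 M).card := by simp
      _ ≤ (K.biUnion S).card := Finset.card_le_card hsub
      _ ≤ ∑ j ∈ K, (S j).card := Finset.card_biUnion_le
  -- per-set bound
  have hexp : θ * (1 - s) = s := by
    rw [hs]; field_simp; ring
  have hterm : ∀ j, ((S j).card : ℝ) ≤ 5 * Metric.diam (B j) ^ s * M := by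
    intro j
    set d := Metric.diam (B j) with hd
    have hdr : r ≤ d := (hdiam j).1
    have hdθ : d ≤ r ^ θ := (hdiam j).2
    have hdpos : 0 < d := lt_of_lt_of_le hr0 hdr
    have h1 : ((S j).card : ℝ) ≤ d * (M:ℝ)^2 + 1 := by
      refine count_in_ball (B j) M d hdpos.le (hBd j) (S j) ?_ ?_
      · intro k hk
        exact Finset.mem_Icc.mp ((Finset.mem_filter.mp hk).1)
      · intro k hk
        exact (Finset.mem_filter.mp hk).2
    have hdsplit : d = d ^ s * d ^ (1 - s) := by
      rw [← Real.rpow_add hdpos]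
      norm_num
    have hdspos : 0 < d ^ s := Real.rpow_pos_of_pos hdpos _
    have hd1s : d ^ (1 - s) ≤ r ^ s := by
      calc d ^ (1 - s) ≤ (r ^ θ) ^ (1 - s) :=
            Real.rpow_le_rpow hdpos.le hdθ (by linarith)
        _ = r ^ (θ * (1 - s)) := by rw [← Real.rpow_mul hr0.le]
        _ = r ^ s := by rw [hexp]
    have hdle : d ≤ d ^ s * r ^ s := by
      calc d = d ^ s * d ^ (1 - s) := hdsplit
        _ ≤ d ^ s * r ^ s := mul_le_mul_of_nonneg_left hd1s hdspos.le
    have hcanc : r ^ s * r ^ (-s) = 1 := by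
      rw [← Real.rpow_add hr0]; norm_num
    have hrsd : r ^ s ≤ d ^ s := Real.rpow_le_rpow hr0.le hdr hs0.le
    have hrspos' : (0:ℝ) < r ^ s := Real.rpow_pos_of_pos hr0 _
    have hone : 1 ≤ d ^ s * M := by
      calc (1:ℝ) = r ^ s * r ^ (-s) := hcanc.symm
        _ ≤ d ^ s * M := by
            apply mul_le_mul hrsd hM1 hrspos.le hdspos.le
    have hdM : d * (M:ℝ)^2 ≤ 2 * (d ^ s) * M := by
      have e1 : d * (M:ℝ)^2 = (d * M) * M := by ring
      have e2 : d * (M:ℝ) ≤ (d ^ s * r ^ s) * (2 * r ^ (-s)) := by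
        apply mul_le_mul hdle hM2 hMpos.le (by positivity)
      have e3 : (d ^ s * r ^ s) * (2 * r ^ (-s)) = 2 * d ^ s * (r ^ s * r ^ (-s)) := by
        ring
      rw [e3, hcanc, mul_one] at e2
      calc d * (M:ℝ)^2 = (d * M) * M := e1
        _ ≤ (2 * d ^ s) * M := mul_le_mul_of_nonneg_right e2 hMpos.le
        _ = 2 * d ^ s * M := rfl
    nlinarith
  have h2 : (M:ℝ) ≤ ∑ j ∈ K, ((S j).card : ℝ) := by exact_mod_cast hcard
  have h3 : ∑ j ∈ K, ((S j).card : ℝ) ≤ ∑ j ∈ K, 5 * Metric.diam (B j) ^ s * M :=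
    Finset.sum_le_sum (fun j _ => hterm j)
  have h4 : ∑ j ∈ K, 5 * Metric.diam (B j) ^ s * (M:ℝ)
      = 5 * M * ∑ j ∈ K, Metric.diam (B j) ^ s := by
    rw [Finset.mul_sum]
    exact Finset.sum_congr rfl (fun j _ => by ring)
  have hsum : (1/5 : ℝ) ≤ ∑ j ∈ K, Metric.diam (B j) ^ s := by
    have h5 : (M:ℝ) ≤ 5 * M * ∑ j ∈ K, Metric.diam (B j) ^ s := by
      rw [← h4]; linarith
    nlinarith
  calc ENNReal.ofReal (1/5) ≤ ENNReal.ofReal (∑ j ∈ K, Metric.diam (B j) ^ s) :=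
        ENNReal.ofReal_le_ofReal hsum
    _ = ∑ j ∈ K, ENNReal.ofReal (Metric.diam (B j) ^ s) :=
        ENNReal.ofReal_sum_of_nonneg (fun j _ => Real.rpow_nonneg Metric.diam_nonneg s)
    _ ≤ ∑' j, ENNReal.ofReal (Metric.diam (B j) ^ s) := ENNReal.sum_le_tsum K
end

section
/- Lower bound for the Assouad spectrum of X = {1/n : n ≥ 1} at small θ: for every θ ∈ (0,1/2) there exists c > 0 such that for all r ∈ (0,1/2), N_r(X ∩ B(0, r^θ)) ≥ c·(r^θ/r)^{(1/2)/(1-θ)}. -/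
open Set Metric

/-!
Since `(r^θ / r)^((1/2)/(1-θ)) = r^(-1/2)`, the claim is `N_r(X ∩ B(0, r^θ)) ≳ r^(-1/2)`.
The points `1/n` with `r^(-θ) ≤ n ≤ r^(-1/2)` lie in `B(0, r^θ)` and are pairwise more than `r`
apart, because `1/n - 1/m ≥ 1/(nm) > r`; so no set of diameter `r` contains two of them. There
are at least `r^(-1/2) - r^(-θ) - 1` of them, and `r^(-θ) ≤ (1/2)^(1/2-θ) r^(-1/2)` because
`θ < 1/2` and `r < 1/2`. Together with `N_r ≥ 1` this gives the bound.
-/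

section Covering

variable {α : Type*} [PseudoMetricSpace α] {X Y : Set α} {r : ℝ} {n : ℕ}

lemma coversWith.mono (h : coversWith X r n) (hYX : Y ⊆ X) : coversWith Y r n :=
  let ⟨B, hB, hXB⟩ := h
  ⟨B, hB, hYX.trans hXB⟩

lemma coversWith.card_le_of_separated (h : coversWith X r n) (hr : 0 ≤ r) {P : Finset α}
    (hPX : ↑P ⊆ X) (hP : (P : Set α).Pairwise fun p q => r < dist p q) : P.card ≤ n := by
  obtain ⟨B, hB, hXB⟩ := h
  choose f hf using fun p : P => mem_iUnion.1 (hXB (hPX p.2))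
  have hf_inj : Function.Injective f := by
    intro p q hpq
    by_contra hne
    have hpq_le := (Metric.edist_le_ediam_of_mem (hf p) (hpq ▸ hf q)).trans (hB _)
    rw [edist_le_ofReal hr] at hpq_le
    exact (hP p.2 q.2 (Subtype.coe_injective.ne hne)).not_ge hpq_le
  simpa using Fintype.card_le_of_injective f hf_inj

lemma card_le_coverNum_of_separated (hX : ∃ n, coversWith X r n) (hr : 0 ≤ r) {P : Finset α}
    (hPX : ↑P ⊆ X) (hP : (P : Set α).Pairwise fun p q => r < dist p q) :
    P.card ≤ coverNum X r :=
  have hN : coversWith X r (coverNum X r) := Nat.sInf_mem hX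
  hN.card_le_of_separated hr hPX hP

lemma coverNum_pos (hX : X.Nonempty) (hcov : ∃ n, coversWith X r n) : 0 < coverNum X r := by
  obtain ⟨B, -, hXB⟩ : coversWith X r (coverNum X r) := Nat.sInf_mem hcov
  obtain ⟨i, -⟩ := mem_iUnion.1 (hXB hX.some_mem)
  exact i.pos

end Covering

/-- The points `1/n` with `n > 1/r` all lie in `[0, r]`; the others are covered one by one. -/
lemma coversWith_recipSet {r : ℝ} (hr : 0 < r) : coversWith recipSet r (⌈1 / r⌉₊ + 1) := by
  refine ⟨fun i => if i.val = 0 then Icc 0 r else {1 / (i.val : ℝ)}, fun i => ?_, ?_⟩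
  · change Metric.ediam _ ≤ _
    by_cases hi : i.val = 0 <;> simp [hi, Real.ediam_Icc]
  · rintro x ⟨n, hn, rfl⟩
    by_cases hnN : n ≤ ⌈1 / r⌉₊
    · exact mem_iUnion.2 ⟨⟨n, by omega⟩, by simp [show n ≠ 0 by omega]⟩
    · refine mem_iUnion.2 ⟨0, ?_⟩
      have hrn : 1 / r < n := (Nat.le_ceil _).trans_lt (by exact_mod_cast not_le.1 hnN)
      simp only [Fin.val_zero, if_true]
      exact ⟨by positivity, (one_div_le (by positivity) hr).2 hrn.le⟩

lemma exists_coversWith_recipSet_inter {r : ℝ} (hr : 0 < r) (Y : Set ℝ) :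
    ∃ n, coversWith (recipSet ∩ Y) r n :=
  ⟨_, (coversWith_recipSet hr).mono inter_subset_left⟩

lemma one_div_natCast_mem_recipSet_inter_closedBall {R : ℝ} (hR : 0 < R) {n : ℕ} (hn : 1 ≤ n)
    (hRn : R⁻¹ ≤ n) : 1 / (n : ℝ) ∈ recipSet ∩ closedBall 0 R := by
  have hn' : (0 : ℝ) < n := by exact_mod_cast hn
  refine ⟨⟨n, hn, rfl⟩, ?_⟩
  rw [mem_closedBall, Real.dist_eq, sub_zero, abs_of_pos (by positivity), one_div]
  exact (inv_le_comm₀ hR hn').1 hRn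

lemma recipSet_inter_closedBall_nonempty {R : ℝ} (hR : 0 < R) :
    (recipSet ∩ closedBall 0 R).Nonempty :=
  ⟨_, one_div_natCast_mem_recipSet_inter_closedBall hR
    (Nat.ceil_pos.2 (inv_pos.2 hR)) (Nat.le_ceil _)⟩

lemma lt_dist_one_div_natCast {r : ℝ} {k m n : ℕ} (hr : 0 < r) (hk : r * k ^ 2 ≤ 1)
    (hm : 1 ≤ m) (hmn : m < n) (hnk : n ≤ k) : r < dist (1 / (m : ℝ)) (1 / n) := by
  have hm' : (1 : ℝ) ≤ m := by exact_mod_cast hm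
  have hmn' : (m : ℝ) + 1 ≤ n := by exact_mod_cast hmn
  have hnk' : (n : ℝ) ≤ k := by exact_mod_cast hnk
  have hm0 : (0 : ℝ) < m := by linarith
  have hn0 : (0 : ℝ) < n := by linarith
  have hrmn : r * (m * n) < 1 := calc
    r * (m * n) < r * k ^ 2 := by gcongr; nlinarith
    _ ≤ 1 := hk
  have hsub : 1 / (m : ℝ) - 1 / n = (n - m) / (m * n) := by
    rw [div_sub_div _ _ hm0.ne' hn0.ne']
    ring
  rw [Real.dist_eq, abs_of_pos (by rw [hsub]; apply div_pos <;> nlinarith), hsub,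
    lt_div_iff₀ (by positivity)]
  linarith

lemma inv_sqrt_sub_inv_sub_one_le_coverNum {r R : ℝ} (hr : 0 < r) (hR : 0 < R) :
    (√r)⁻¹ - R⁻¹ - 1 ≤ coverNum (recipSet ∩ closedBall 0 R) r := by
  set a := ⌈R⁻¹⌉₊
  set k := ⌊(√r)⁻¹⌋₊
  have ha : 1 ≤ a := Nat.ceil_pos.2 (inv_pos.2 hR)
  have hk : r * k ^ 2 ≤ 1 := by
    have hk_le : (k : ℝ) * √r ≤ 1 :=
      (le_div_iff₀ (Real.sqrt_pos.2 hr)).1 (by simpa [one_div] using Nat.floor_le (by positivity))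
    calc r * k ^ 2 = (k * √r) ^ 2 := by rw [mul_pow, Real.sq_sqrt hr.le]; ring
      _ ≤ 1 := pow_le_one₀ (by positivity) hk_le
  set P := (Finset.Icc a k).image fun n : ℕ => 1 / (n : ℝ)
  have hinj : Function.Injective fun n : ℕ => 1 / (n : ℝ) := by
    intro m n hmn
    simpa using hmn
  have hPX : ↑P ⊆ recipSet ∩ closedBall 0 R := by
    simp only [P, Finset.coe_image, Finset.coe_Icc, image_subset_iff]
    intro n hn
    exact one_div_natCast_mem_recipSet_inter_closedBall hR (ha.trans hn.1)
      ((Nat.le_ceil _).trans (by exact_mod_cast hn.1))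
  have hP : (P : Set ℝ).Pairwise fun p q => r < dist p q := by
    simp only [P, Finset.coe_image, Finset.coe_Icc]
    rw [hinj.injOn.pairwise_image]
    intro m hm n hn hmn
    rcases hmn.lt_or_gt with hlt | hlt
    · exact lt_dist_one_div_natCast hr hk (ha.trans hm.1) hlt hn.2
    · rw [Function.onFun, dist_comm]
      exact lt_dist_one_div_natCast hr hk (ha.trans hn.1) hlt hm.2
  have hcard : P.card = k + 1 - a := by
    rw [Finset.card_image_of_injective _ hinj, Nat.card_Icc]
  have hPN : (P.card : ℝ) ≤ coverNum (recipSet ∩ closedBall 0 R) r := by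
    exact_mod_cast card_le_coverNum_of_separated (exists_coversWith_recipSet_inter hr _) hr.le hPX hP
  have hk_gt := Nat.sub_one_lt_floor (√r)⁻¹
  have ha_lt := Nat.ceil_lt_add_one (inv_pos.2 hR).le
  have hsub : ((k + 1 : ℕ) : ℝ) ≤ ((k + 1 - a : ℕ) : ℝ) + a := by exact_mod_cast le_tsub_add
  push_cast at hsub
  rw [hcard] at hPN
  linarith

theorem stmt15 (θ : ℝ) (hθ : θ ∈ Ioo (0:ℝ) (1/2)) :
    ∃ c > (0:ℝ), ∀ r ∈ Ioo (0:ℝ) (1/2),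
      c * (r ^ θ / r) ^ ((1/2) / (1 - θ)) ≤
        (coverNum (recipSet ∩ closedBall (0:ℝ) (r ^ θ)) r : ℝ) := by
  obtain ⟨-, hθ⟩ := hθ
  set q : ℝ := (1 / 2) ^ (1 / 2 - θ)
  have hq : q < 1 := Real.rpow_lt_one (by norm_num) (by norm_num) (by linarith)
  refine ⟨(1 - q) / 2, by linarith, fun r ⟨hr, hr2⟩ => ?_⟩
  have hR : 0 < r ^ θ := Real.rpow_pos_of_pos hr θ
  have hscale : (r ^ θ / r) ^ ((1 / 2) / (1 - θ)) = (√r)⁻¹ := by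
    rw [← Real.rpow_sub_one hr.ne', ← Real.rpow_mul hr.le, Real.sqrt_eq_rpow, ← Real.rpow_neg hr.le]
    have h1θ : 1 - θ ≠ 0 := by linarith
    congr 1
    field_simp
    ring
  have hinv : (r ^ θ)⁻¹ ≤ q * (√r)⁻¹ := by
    have hsplit : (r ^ θ)⁻¹ = r ^ (1 / 2 - θ) * (√r)⁻¹ := by
      rw [Real.sqrt_eq_rpow, ← Real.rpow_neg hr.le, ← Real.rpow_neg hr.le, ← Real.rpow_add hr]
      ring_nf
    rw [hsplit]
    gcongr
    exact Real.rpow_le_rpow hr.le hr2.le (by linarith)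
  have hone : (1 : ℝ) ≤ coverNum (recipSet ∩ closedBall 0 (r ^ θ)) r := by
    exact_mod_cast coverNum_pos (recipSet_inter_closedBall_nonempty hR)
      (exists_coversWith_recipSet_inter hr _)
  have hcount := inv_sqrt_sub_inv_sub_one_le_coverNum hr hR
  rw [hscale]
  linarith
end
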